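/- Conversely to the previous statement: if v ∈ ℝⁿ satisfies v_i ≥ 0 for all i (or v_i ≤ 0 for all i), then there exists ξ ∈ ℝⁿ, ξ ≠ 0, such that ξ_i² v_j = ξ_j² v_i for all i, j. Hence the wave cone Λ_𝒜 of the operator 𝒜(v)_{ij} = ∂_{ii}v_j − ∂_{jj}v_i equals the set of vectors whose components all have the same sign. -/
import Mathlib

lemma forward_dir (n : ℕ) (hn : 1 ≤ n) (v : Fin n → ℝ)
    (hv : (∀ i, 0 ≤ v i) ∨ (∀ i, v i ≤ 0)) :
    ∃ ξ : Fin n → ℝ, ξ ≠ 0 ∧ ∀ i j, ξ i ^ 2 * v j = ξ j ^ 2 * v i := by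
  by_cases hz : v = 0
  · refine ⟨fun _ => 1, ?_, ?_⟩
    · intro h
      have : (1:ℝ) = 0 := congrFun h ⟨0, hn⟩
      norm_num at this
    · simp [hz]
  · have hne : ∃ k, v k ≠ 0 := by
      by_contra h
      push_neg at h
      exact hz (funext h)
    obtain ⟨k, hk⟩ := hne
    rcases hv with hv | hv
    · refine ⟨fun i => Real.sqrt (v i), ?_, ?_⟩
      · intro h
        have := congrFun h k
        simp only [Pi.zero_apply] at this
        have : v k = 0 := by
          have h2 := Real.sqrt_eq_zero (hv k) |>.mp this
          exact h2
        exact hk this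
      · intro i j
        rw [Real.sq_sqrt (hv i), Real.sq_sqrt (hv j)]
        ring
    · refine ⟨fun i => Real.sqrt (-v i), ?_, ?_⟩
      · intro h
        have := congrFun h k
        simp only [Pi.zero_apply] at this
        have h2 := Real.sqrt_eq_zero (by linarith [hv k]) |>.mp this
        exact hk (by linarith)
      · intro i j
        have hi : Real.sqrt (-v i) ^ 2 = -v i := Real.sq_sqrt (by linarith [hv i])
        have hj : Real.sqrt (-v j) ^ 2 = -v j := Real.sq_sqrt (by linarith [hv j])
        rw [hi, hj]; ring

theorem stmt_2 (n : ℕ) (hn : 1 ≤ n) :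
    (∀ v : Fin n → ℝ, ((∀ i, 0 ≤ v i) ∨ (∀ i, v i ≤ 0)) →
      ∃ ξ : Fin n → ℝ, ξ ≠ 0 ∧ ∀ i j, ξ i ^ 2 * v j = ξ j ^ 2 * v i) ∧
    {v : Fin n → ℝ | ∃ ξ : Fin n → ℝ, ξ ≠ 0 ∧ ∀ i j, ξ i ^ 2 * v j = ξ j ^ 2 * v i} =
      {v : Fin n → ℝ | (∀ i, 0 ≤ v i) ∨ (∀ i, v i ≤ 0)} := by
  refine ⟨forward_dir n hn, ?_⟩
  ext v
  simp only [Set.mem_setOf_eq]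
  constructor
  · rintro ⟨ξ, hξ, h⟩
    have hne : ∃ k, ξ k ≠ 0 := by
      by_contra hc
      push_neg at hc
      exact hξ (funext hc)
    obtain ⟨k, hk⟩ := hne
    have hk2 : 0 < ξ k ^ 2 := by positivity
    rcases le_or_gt 0 (v k) with hvk | hvk
    · left
      intro i
      have := h k i
      nlinarith [sq_nonneg (ξ i)]
    · right
      intro i
      have := h k i
      nlinarith [sq_nonneg (ξ i)]
  · exact forward_dir n hn v
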